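/- arXiv:2206.09473 — 4 statements merged into one kernel-verified Lean document; each statement's English description precedes it below -/
import Mathlib

section
/- Let A be an n×n alternating matrix over a commutative ring and M an n×n matrix. Then the Pfaffian of M^T A M equals det(M) times the Pfaffian of A. -/
open Matrix

/-- The Pfaffian of a square matrix, defined by recursive expansion along the
first row.  For alternating matrices this agrees with the signed sum over
perfect matchings; for matrices of odd size it is `0`. -/
noncomputable def Matrix.pf {R : Type*} [CommRing R] : {n : ℕ} → Matrix (Fin n) (Fin n) R → R
  | 0, _ => 1
  | 1, _ => 0
  | (n + 2), A => ∑ j : Fin (n + 1),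
      (-1 : R) ^ (j : ℕ) * A 0 j.succ *
        Matrix.pf (A.submatrix (Fin.succ ∘ j.succAbove) (Fin.succ ∘ j.succAbove))

/-!
For an alternating bilinear form `b` on a module `N`, the Pfaffian of the Gram matrix
`(b (v i) (v j))` is an alternating form in `v : Fin m → N`. For `b x y = xᵀ A y` on
`Fin n → R` and `v` the columns of `M`, the Gram matrix is `Mᵀ A M`, so the determinant factor
comes from the uniqueness of top-degree alternating forms on `Fin n → R`.

The expansion along the first row reads `P (x, w) = (b x ∧ P') w`, where `P'` is the Pfaffian form
in two fewer variables and `φ ∧ g` is the wedge of a linear form with an alternating form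
(`alternatizeUncurryFin`). This is alternating in `w`, and the remaining case `w 0 = x` follows
from the Leibniz rule for the interior product `ι_x`:
`ι_x (b x ∧ P) = b x x • P - b x ∧ ι_x P = - b x ∧ b x ∧ P' = 0`.
-/

namespace AlternatingMap

open Fin

variable {R M N : Type*} [CommRing R] [AddCommGroup M] [Module R M] [AddCommGroup N] [Module R N]
  {n : ℕ}

theorem curryLeft_alternatizeUncurryFin_smulRight (φ : M →ₗ[R] R)
    (g : M [⋀^Fin (n + 1)]→ₗ[R] N) (x : M) :
    (alternatizeUncurryFin (φ.smulRight g)).curryLeft x =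
      φ x • g - alternatizeUncurryFin (φ.smulRight (g.curryLeft x)) := by
  ext u
  have hremove (k : Fin (n + 1)) :
      k.succ.removeNth (cons x u : Fin (n + 2) → M) = cons x (k.removeNth u) :=
    cons_comp_succ_succAbove x u k
  rw [curryLeft_apply_apply, alternatizeUncurryFin_apply, sum_univ_succ]
  simp [alternatizeUncurryFin_apply, pow_succ, sub_eq_add_neg, Matrix.vecCons, hremove]

theorem alternatizeUncurryFin_smulRight_self (φ : M →ₗ[R] R) (g : M [⋀^Fin n]→ₗ[R] N) :
    alternatizeUncurryFin (φ.smulRight (alternatizeUncurryFin (φ.smulRight g))) = 0 := by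
  have hcomp : alternatizeUncurryFinLM ∘ₗ φ.smulRight (φ.smulRight g) =
      φ.smulRight (alternatizeUncurryFin (φ.smulRight g)) := by
    ext y : 1
    simp
  rw [← hcomp]
  exact alternatizeUncurryFin_alternatizeUncurryFinLM_comp_of_symmetric fun y z => by
    ext; simp [smul_comm (φ y)]

theorem apply_apply_eq_zero_of_curryLeft_self (T : M →ₗ[R] M [⋀^Fin (n + 1)]→ₗ[R] N)
    (hT : ∀ x, (T x).curryLeft x = 0) (v : Fin (n + 1) → M) (k : Fin (n + 1)) :
    T (v k) v = 0 := by
  rw [← insertNth_self_removeNth k v, map_insertNth, insertNth_apply_same]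
  simp [← curryLeft_apply_apply, hT]

section OfCurryLeft

variable (T : M →ₗ[R] M [⋀^Fin (n + 1)]→ₗ[R] N) (hT : ∀ x, (T x).curryLeft x = 0)

def ofCurryLeft : M [⋀^Fin (n + 2)]→ₗ[R] N where
  toMultilinearMap := (toMultilinearMapLM ∘ₗ T).uncurryLeft
  map_eq_zero_of_eq' v i j hv hij := by
    wlog hlt : i < j generalizing i j
    · exact this j i hv.symm hij.symm (lt_of_le_of_ne (not_lt.1 hlt) hij.symm)
    obtain ⟨j, rfl⟩ := exists_succ_eq.2 (Fin.ne_zero_of_lt hlt)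
    change T (v 0) (tail v) = 0
    induction i using Fin.cases with
    | zero => rw [hv]; exact apply_apply_eq_zero_of_curryLeft_self T hT (tail v) j
    | succ i => exact (T (v 0)).map_eq_zero_of_eq (tail v) hv (succ_lt_succ_iff.1 hlt).ne

theorem ofCurryLeft_apply (v : Fin (n + 2) → M) : ofCurryLeft T hT v = T (v 0) (tail v) := rfl

theorem curryLeft_ofCurryLeft : (ofCurryLeft T hT).curryLeft = T := by
  ext x v
  simp [ofCurryLeft_apply]

end OfCurryLeft

def bilinWedge (b : M →ₗ[R] M →ₗ[R] R) (f : M [⋀^Fin n]→ₗ[R] N) :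
    M →ₗ[R] M [⋀^Fin (n + 1)]→ₗ[R] N :=
  alternatizeUncurryFinLM ∘ₗ LinearMap.smulRightₗ.flip f ∘ₗ b

@[simp]
theorem bilinWedge_apply (b : M →ₗ[R] M →ₗ[R] R) (f : M [⋀^Fin n]→ₗ[R] N) (x : M) :
    bilinWedge b f x = alternatizeUncurryFin ((b x).smulRight f) := rfl

end AlternatingMap

namespace Matrix

open AlternatingMap

theorem isAlt_toBilin' {ι R : Type*} [Fintype ι] [DecidableEq ι] [CommRing R]
    {A : Matrix ι ι R} (hA : Aᵀ = -A) (hdiag : ∀ i, A i i = 0) : (toBilin' A).IsAlt := by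
  intro x
  rw [toBilin'_apply, ← Finset.sum_product', Finset.univ_product_univ]
  refine Finset.sum_ninvolution Prod.swap (fun p => ?_) (fun p hp hswap => hp ?_)
    (fun _ => Finset.mem_univ _) Prod.swap_swap
  · have hA' : A p.2 p.1 = -A p.1 p.2 := by simpa using congrFun (congrFun hA p.1) p.2
    simp only [Prod.fst_swap, Prod.snd_swap, hA']
    ring
  · obtain ⟨i, j⟩ := p
    obtain rfl : j = i := congrArg Prod.fst hswap
    simp [hdiag]

/-- The second conjunct, `ι_x (b x ∧ f) = 0`, is what `ofCurryLeft` needs to build the next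
Pfaffian form from `f`. -/
theorem exists_alternatingMap_eq_pf_gram {R N : Type*} [CommRing R] [AddCommGroup N] [Module R N]
    (b : N →ₗ[R] N →ₗ[R] R) (hb : b.IsAlt) : ∀ m : ℕ, ∃ f : N [⋀^Fin m]→ₗ[R] R,
      (∀ v, f v = pf (of fun i j => b (v i) (v j))) ∧ ∀ x, (bilinWedge b f x).curryLeft x = 0
  | 0 => ⟨constOfIsEmpty R N (Fin 0) 1, fun _ => rfl, fun x => by
      ext u; simp [alternatizeUncurryFin_apply, hb.self_eq_zero]⟩
  | 1 => ⟨0, fun _ => rfl, fun x => by ext; simp [alternatizeUncurryFin_apply]⟩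
  | m + 2 => by
    obtain ⟨f, hf, hT⟩ := exists_alternatingMap_eq_pf_gram b hb m
    refine ⟨ofCurryLeft (bilinWedge b f) hT, fun v => ?_, fun x => ?_⟩
    · rw [ofCurryLeft_apply, bilinWedge_apply, alternatizeUncurryFin_apply, pf]
      refine Finset.sum_congr rfl fun j _ => ?_
      rw [LinearMap.smulRight_apply, AlternatingMap.smul_apply, hf, smul_eq_mul, zsmul_eq_mul,
        mul_assoc]
      push_cast
      rfl
    · rw [bilinWedge_apply, curryLeft_alternatizeUncurryFin_smulRight, curryLeft_ofCurryLeft,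
        bilinWedge_apply, alternatizeUncurryFin_smulRight_self, hb.self_eq_zero, zero_smul,
        sub_zero]

end Matrix

/-- if `A` is an `n × n` alternating matrix over a commutative ring
and `M` is any `n × n` matrix, then `Pf(Mᵀ * A * M) = det M * Pf A`. -/
theorem pf_conjugate {R : Type*} [CommRing R] {n : ℕ}
    (A M : Matrix (Fin n) (Fin n) R)
    (hA : Aᵀ = -A) (hdiag : ∀ i, A i i = 0) :
    Matrix.pf (Mᵀ * A * M) = M.det * Matrix.pf A := by
  obtain ⟨f, hf, -⟩ := exists_alternatingMap_eq_pf_gram _ (isAlt_toBilin' hA hdiag) n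
  have hA' : of (fun i j => toBilin' A (Pi.basisFun R _ i) (Pi.basisFun R _ j)) = A := by
    ext; simp
  have hMAM : of (fun i j => toBilin' A (M.col i) (M.col j)) = Mᵀ * A * M := by
    ext i j
    rw [← toBilin'_single (Mᵀ * A * M), ← toBilin'_comp]
    simp
  calc pf (Mᵀ * A * M) = f M.col := by rw [hf, hMAM]
    _ = det (of M.col) * f (Pi.basisFun R _) := by
      conv_lhs => rw [f.eq_smul_basis_det (Pi.basisFun R _)]
      rw [AlternatingMap.smul_apply, Pi.basisFun_det_apply, smul_eq_mul, mul_comm]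
    _ = det M * pf A := by rw [hf, hA', ← det_transpose M]; rfl
end

section
/- Let k be a field, U a finite-dimensional k-vector space, and Φ an element of D_s U* = Hom_k(Sym_s U, k), viewed inside the graded dual D_• U* of Sym_• U with its Sym_• U-module structure. Then ann_{D_• U*}(ann_{Sym_• U}(Φ)) equals the Sym_• U-submodule of D_• U* generated by Φ. -/
/-!
For a functional `Φ` on a commutative `k`-algebra `A`, the symmetric bilinear form
`(a, b) ↦ Φ (a * b)` has kernel the ideal `ann Φ`, so `a ↦ Φ (a * ·)` lands in the functionals
vanishing on `ann Φ`; when `A ⧸ ann Φ` is finite dimensional, both spaces have dimension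
`dim (A ⧸ ann Φ)` and therefore coincide. Since `ann Φ` is an ideal, a functional vanishes on it
exactly when all its contractions by elements of `ann Φ` vanish. For `Φ` of degree `s` every
monomial of degree `> s` annihilates `Φ`, so `A ⧸ ann Φ` is a quotient of the finite-dimensional
space of polynomials of total degree `≤ s`.
-/

open MvPolynomial

variable {k : Type*} [Field k] {σ : Type*} [Fintype σ]

/-- Contraction: the action of a polynomial `μ ∈ Sym_• U` on a functional
`w` in the (graded) dual `D_• U*` of the polynomial ring:
`(μ ⋄ w)(ν) = w(μ ν)`. -/
noncomputable def contr (μ : MvPolynomial σ k)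
    (w : Module.Dual k (MvPolynomial σ k)) : Module.Dual k (MvPolynomial σ k) :=
  w.comp (LinearMap.mulLeft k μ)

namespace Module.Dual

section CommSemiring

variable {R A : Type*} [CommSemiring R] [CommSemiring A] [Algebra R A]

noncomputable def mulForm (Φ : Module.Dual R A) : A →ₗ[R] Module.Dual R A :=
  (LinearMap.mul R A).compr₂ Φ

@[simp]
theorem mulForm_apply (Φ : Module.Dual R A) (a b : A) : Φ.mulForm a b = Φ (a * b) := rfl

end CommSemiring

variable {A : Type*} [CommRing A] [Algebra k A]

theorem range_mulForm_eq_dualAnnihilator_ker (Φ : Module.Dual k A)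
    [FiniteDimensional k (A ⧸ LinearMap.ker Φ.mulForm)] :
    LinearMap.range Φ.mulForm = (LinearMap.ker Φ.mulForm).dualAnnihilator := by
  set K := LinearMap.ker Φ.mulForm
  have : FiniteDimensional k K.dualAnnihilator :=
    K.dualQuotEquivDualAnnihilator.finiteDimensional
  refine Submodule.eq_of_le_of_finrank_eq ?_ ?_
  · rintro _ ⟨a, rfl⟩
    refine (Submodule.mem_dualAnnihilator _).2 fun m hm => ?_
    rw [mulForm_apply, mul_comm, ← mulForm_apply, LinearMap.mem_ker.1 hm, LinearMap.zero_apply]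
  · rw [← K.dualQuotEquivDualAnnihilator.finrank_eq, Subspace.dual_finrank_eq,
      Φ.mulForm.quotKerEquivRange.finrank_eq]

theorem mem_range_mulForm_iff (Φ w : Module.Dual k A)
    [FiniteDimensional k (A ⧸ LinearMap.ker Φ.mulForm)] :
    w ∈ LinearMap.range Φ.mulForm ↔ ∀ μ, Φ.mulForm μ = 0 → w.mulForm μ = 0 := by
  rw [range_mulForm_eq_dualAnnihilator_ker, Submodule.mem_dualAnnihilator]
  refine ⟨fun hw μ hμ => LinearMap.ext fun p => hw _ ?_, fun hw μ hμ => ?_⟩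
  · ext q
    simpa [mul_assoc] using LinearMap.congr_fun hμ (p * q)
  · simpa using LinearMap.congr_fun (hw μ hμ) 1

end Module.Dual

open Module.Dual

theorem mulForm_monomial_eq_zero {R σ : Type*} [CommRing R] {s : ℕ}
    {Φ : Module.Dual R (MvPolynomial σ R)}
    (hΦ : ∀ p : MvPolynomial σ R, Φ p = Φ (homogeneousComponent s p)) {u : σ →₀ ℕ}
    (hu : s < u.degree) (a : R) : Φ.mulForm (monomial u a) = 0 := by
  refine LinearMap.ext fun p => ?_
  rw [mulForm_apply, hΦ, LinearMap.zero_apply]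
  convert Φ.map_zero
  ext d
  rw [coeff_homogeneousComponent, coeff_monomial_mul', coeff_zero, ite_eq_right_iff]
  exact fun hd => if_neg fun hud => (hd ▸ hu).not_ge (Finsupp.degree_mono hud)

theorem restrictTotalDegree_sup_ker_mulForm_eq_top {R σ : Type*} [CommRing R] {s : ℕ}
    {Φ : Module.Dual R (MvPolynomial σ R)}
    (hΦ : ∀ p : MvPolynomial σ R, Φ p = Φ (homogeneousComponent s p)) :
    restrictTotalDegree σ R s ⊔ LinearMap.ker Φ.mulForm = ⊤ := by
  refine eq_top_iff.2 fun p _ => p.induction_on' (fun u a => ?_) fun _ _ => Submodule.add_mem _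
  by_cases hu : u.degree ≤ s
  · exact Submodule.mem_sup_left ((mem_restrictTotalDegree _ _ _).2
      ((isHomogeneous_monomial a rfl).totalDegree_le.trans hu))
  · exact Submodule.mem_sup_right (mulForm_monomial_eq_zero hΦ (not_le.1 hu) a)

theorem finiteDimensional_quotient_ker_mulForm {s : ℕ} {Φ : Module.Dual k (MvPolynomial σ k)}
    (hΦ : ∀ p : MvPolynomial σ k, Φ p = Φ (homogeneousComponent s p)) :
    FiniteDimensional k (MvPolynomial σ k ⧸ LinearMap.ker Φ.mulForm) := by
  refine Module.Finite.of_surjective ((LinearMap.ker Φ.mulForm).mkQ ∘ₗ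
    (restrictTotalDegree σ k s).subtype) ?_
  rw [← LinearMap.range_eq_top, LinearMap.range_comp, Submodule.range_subtype,
    Submodule.map_mkQ_eq_top, sup_comm, restrictTotalDegree_sup_ker_mulForm_eq_top hΦ]

theorem contr_eq_mulForm {σ : Type*} (μ : MvPolynomial σ k)
    (w : Module.Dual k (MvPolynomial σ k)) :
    contr μ w = w.mulForm μ :=
  rfl

/-- for `Φ` in the degree-`s` part of the graded dual of
`Sym_• U` (`U` finite dimensional, with a chosen basis `σ`), the annihilator
in the dual of the annihilator ideal of `Φ` is exactly the `Sym_• U`-submodule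
generated by `Φ`, i.e. the set of all contractions `μ ⋄ Φ`. -/
theorem ann_ann_eq_cyclic (s : ℕ) (Φ : Module.Dual k (MvPolynomial σ k))
    (hΦ : ∀ p : MvPolynomial σ k, Φ p = Φ (homogeneousComponent s p)) :
    {w : Module.Dual k (MvPolynomial σ k) |
        ∀ μ : MvPolynomial σ k, contr μ Φ = 0 → contr μ w = 0} =
      {w : Module.Dual k (MvPolynomial σ k) |
        ∃ r : MvPolynomial σ k, w = contr r Φ} := by
  have := finiteDimensional_quotient_ker_mulForm hΦ
  ext w
  simp only [Set.mem_ofPred_eq, contr_eq_mulForm, eq_comm (a := w)]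
  exact (mem_range_mulForm_iff Φ w).symm
end

section
/- Let R = k[x,y,z] be a standard graded polynomial ring over a field, n a positive even integer, U = R_1, Φ ∈ D_{2n-1} U*, and J = ann_{Sym U}(Φ). Assume J_{n-1} = 0 and that x is a weak Lefschetz element for R/J. Then the ideal I = ann_{Sym U}(x(Φ)) satisfies I_{n-1} = 0 and (R/I)_{2n-1} = 0; that is, I is a linearly presented grade-three Gorenstein ideal generated in degree n. -/
/-!
If `μ ∈ I = ann(x(Φ))` then `xμ ∈ J = ann Φ`, so `I_{n-1} = 0` follows once multiplication by `x`
is injective from `(R/J)_{n-1}` to `(R/J)_n`. The pairing `R_i × R_{2n-1-i} → k`,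
`(a, b) ↦ Φ(ab)`, has kernels `J_i` and `J_{2n-1-i}`, so `R/J` has a symmetric Hilbert function
and these two spaces have the same dimension; hence in both cases of the weak Lefschetz property
at degree `n-1` the multiplication is injective. `(R/I)_{2n-1} = 0` is a degree count:
`x(Φ)` lives in degree `2n-2`.
-/

open MvPolynomial

/-- The annihilator ideal `ann_{Sym U}(Φ) = {μ | μ(Φ) = 0}` of a functional
`Φ` on the polynomial ring, where `μ(Φ)` is the contraction `ν ↦ Φ(μν)`. -/
def annIdeal {k : Type*} [Field k] {σ : Type*}
    (Φ : Module.Dual k (MvPolynomial σ k)) : Ideal (MvPolynomial σ k) where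
  carrier := {μ | ∀ ν, Φ (μ * ν) = 0}
  add_mem' := by
    intro a b ha hb ν
    rw [add_mul, map_add, ha ν, hb ν, add_zero]
  zero_mem' := by intro ν; rw [zero_mul, map_zero]
  smul_mem' := by
    intro c μ hμ ν
    have : (c • μ) * ν = μ * (c * ν) := by rw [smul_eq_mul]; ring
    rw [this]
    exact hμ (c * ν)

variable (k : Type*) [Field k]

/-- The degree-`i` graded piece of the quotient `k[x,y,z]/J`, realized as the
image of the homogeneous polynomials of degree `i`. -/
noncomputable def piece (J : Ideal (MvPolynomial (Fin 3) k)) (i : ℕ) :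
    Submodule k (MvPolynomial (Fin 3) k ⧸ J) :=
  Submodule.map (Ideal.Quotient.mkₐ k J).toLinearMap (homogeneousSubmodule (Fin 3) k i)

open Module LinearMap

variable {k}

theorem LinearMap.finrank_range_flip {V W : Type*} [AddCommGroup V] [Module k V]
    [AddCommGroup W] [Module k W] [FiniteDimensional k W] (B : V →ₗ[k] W →ₗ[k] k) :
    finrank k (range B.flip) = finrank k (range B) := by
  change finrank k (range (B.dualMap ∘ₗ (evalEquiv k W).toLinearMap)) = _
  rw [range_comp_of_range_eq_top _ (LinearEquiv.range _), finrank_range_dualMap_eq_finrank_range]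

theorem LinearMap.finrank_range_eq_of_ker_eq {R V M N : Type*} [Ring R] [AddCommGroup V]
    [Module R V] [AddCommGroup M] [Module R M] [AddCommGroup N] [Module R N]
    {f : V →ₗ[R] M} {g : V →ₗ[R] N} (h : ker f = ker g) :
    finrank R (range f) = finrank R (range g) :=
  (f.quotKerEquivRange.symm.trans
    ((Submodule.quotEquivOfEq _ _ h).trans g.quotKerEquivRange)).finrank_eq

theorem LinearMap.injective_of_le_range_of_finrank_le {V M : Type*} [AddCommGroup V]
    [Module k V] [FiniteDimensional k V] [AddCommGroup M] [Module k M] {f : V →ₗ[k] M}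
    {W : Submodule k M} (hW : W ≤ range f) (hVW : finrank k V ≤ finrank k W) :
    Function.Injective f := by
  have hrank := f.finrank_range_add_finrank_ker
  have := Submodule.finrank_mono hW
  rw [← ker_eq_bot, ← Submodule.finrank_eq_zero]
  omega

theorem mul_left_eq_zero_of_surjOn_of_finrank_eq {A : Type*} [Ring A] [Algebra k A]
    {V W : Submodule k A} [FiniteDimensional k V] (c : A)
    (hVW : finrank k W = finrank k V) (hsurj : ∀ b ∈ W, ∃ a ∈ V, c * a = b) :
    ∀ a ∈ V, c * a = 0 → a = 0 := by
  have hinj : Function.Injective (mulLeft k c ∘ₗ V.subtype) := by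
    refine injective_of_le_range_of_finrank_le (W := W) (fun b hb => ?_) hVW.ge
    obtain ⟨a, ha, rfl⟩ := hsurj b hb
    exact ⟨⟨a, ha⟩, rfl⟩
  intro a ha hca
  simpa using @hinj ⟨a, ha⟩ 0 (by simpa using hca)

instance MvPolynomial.finite_homogeneousSubmodule {σ R : Type*} [CommSemiring R] [Finite σ]
    (n : ℕ) : Module.Finite R (homogeneousSubmodule σ R n) :=
  Module.Finite.iff_fg.2 (homogeneousSubmodule_fg _ _ _)

section Annihilator

variable {σ : Type*}

theorem mem_annIdeal_comp_mulLeft_iff {Φ : Module.Dual k (MvPolynomial σ k)}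
    {a μ : MvPolynomial σ k} : μ ∈ annIdeal (Φ.comp (mulLeft k a)) ↔ a * μ ∈ annIdeal Φ := by
  change (∀ ν, Φ (a * (μ * ν)) = 0) ↔ ∀ ν, Φ (a * μ * ν) = 0
  simp only [mul_assoc]

/-- `Φ ∈ D_d`, the degree-`d` part of the graded dual of the polynomial ring. -/
def IsHomogeneousDual (Φ : Module.Dual k (MvPolynomial σ k)) (d : ℕ) : Prop :=
  ∀ p, Φ p = Φ (homogeneousComponent d p)

noncomputable def homogeneousPairing (Φ : Module.Dual k (MvPolynomial σ k)) (i j : ℕ) :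
    homogeneousSubmodule σ k i →ₗ[k] homogeneousSubmodule σ k j →ₗ[k] k :=
  ((mul k (MvPolynomial σ k)).compr₂ Φ).compl₁₂ (Submodule.subtype _) (Submodule.subtype _)

theorem homogeneousPairing_flip (Φ : Module.Dual k (MvPolynomial σ k)) (i j : ℕ) :
    (homogeneousPairing Φ i j).flip = homogeneousPairing Φ j i := by
  ext a b
  simp [homogeneousPairing, mul_comm]

namespace IsHomogeneousDual

variable {Φ : Module.Dual k (MvPolynomial σ k)} {d e : ℕ} {p : MvPolynomial σ k}

theorem apply_eq_zero (hΦ : IsHomogeneousDual Φ d) (hp : p.IsHomogeneous e) (he : e ≠ d) :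
    Φ p = 0 := by
  rw [hΦ p, homogeneousComponent_of_mem hp, if_neg he.symm, map_zero]

theorem mem_annIdeal_iff (hΦ : IsHomogeneousDual Φ d) (hp : p.IsHomogeneous e) :
    p ∈ annIdeal Φ ↔ ∀ ν : MvPolynomial σ k, ν.IsHomogeneous (d - e) → Φ (p * ν) = 0 := by
  refine ⟨fun h ν _ => h ν, fun h ν => ?_⟩
  rw [← sum_homogeneousComponent ν, Finset.mul_sum, map_sum]
  refine Finset.sum_eq_zero fun m _ => ?_
  have hm := homogeneousComponent_isHomogeneous m ν
  by_cases hdeg : e + m = d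
  · exact h _ (by rwa [← hdeg, Nat.add_sub_cancel_left])
  · exact hΦ.apply_eq_zero (hp.mul hm) hdeg

theorem mem_annIdeal_of_lt (hΦ : IsHomogeneousDual Φ d) (hp : p.IsHomogeneous e) (he : d < e) :
    p ∈ annIdeal Φ :=
  (hΦ.mem_annIdeal_iff hp).2 fun _ hν => hΦ.apply_eq_zero (hp.mul hν) (by omega)

variable {i j : ℕ}

theorem ker_homogeneousPairing (hΦ : IsHomogeneousDual Φ d) (hij : i + j = d) :
    ker (homogeneousPairing Φ i j) =
      ker ((Ideal.Quotient.mkₐ k (annIdeal Φ)).toLinearMap ∘ₗ Submodule.subtype _) := by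
  ext ⟨a, ha⟩
  have hj : d - i = j := by omega
  simp only [mem_ker, comp_apply, Submodule.subtype_apply, AlgHom.toLinearMap_apply,
    Ideal.Quotient.mkₐ_eq_mk, Ideal.Quotient.eq_zero_iff_mem, hΦ.mem_annIdeal_iff ha, hj]
  refine ⟨fun h ν hν => ?_, fun h => LinearMap.ext fun ν => h ν ν.2⟩
  simpa [homogeneousPairing] using LinearMap.congr_fun h ⟨ν, hν⟩

theorem finrank_map_homogeneousSubmodule_eq_finrank_range (hΦ : IsHomogeneousDual Φ d)
    (hij : i + j = d) :
    finrank k ((homogeneousSubmodule σ k i).map (Ideal.Quotient.mkₐ k (annIdeal Φ)).toLinearMap) =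
      finrank k (range (homogeneousPairing Φ i j)) := by
  rw [finrank_range_eq_of_ker_eq (hΦ.ker_homogeneousPairing hij), range_comp,
    Submodule.range_subtype]

variable [Finite σ]

/-- Gorenstein symmetry of the Hilbert function of `R/ann Φ`. -/
theorem finrank_map_homogeneousSubmodule_eq (hΦ : IsHomogeneousDual Φ d) (hij : i + j = d) :
    finrank k ((homogeneousSubmodule σ k i).map (Ideal.Quotient.mkₐ k (annIdeal Φ)).toLinearMap) =
      finrank k ((homogeneousSubmodule σ k j).map
        (Ideal.Quotient.mkₐ k (annIdeal Φ)).toLinearMap) := by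
  rw [hΦ.finrank_map_homogeneousSubmodule_eq_finrank_range hij,
    hΦ.finrank_map_homogeneousSubmodule_eq_finrank_range (j := i) (by omega),
    ← homogeneousPairing_flip, finrank_range_flip]

end IsHomogeneousDual

end Annihilator

instance (J : Ideal (MvPolynomial (Fin 3) k)) (i : ℕ) : Module.Finite k (piece k J i) :=
  inferInstanceAs (Module.Finite k (Submodule.map _ _))

theorem ann_x_phi_linearly_presented_general (n : ℕ) (hpos : 0 < n)
    (Φ : Module.Dual k (MvPolynomial (Fin 3) k))
    (hΦ : ∀ p, Φ p = Φ (homogeneousComponent (2 * n - 1) p))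
    (hJ : ∀ μ ∈ annIdeal Φ, μ ∈ homogeneousSubmodule (Fin 3) k (n - 1) → μ = 0)
    (hWL : ∀ i : ℕ,
      (∀ a ∈ piece k (annIdeal Φ) i,
        Ideal.Quotient.mk (annIdeal Φ) (X 0) * a = 0 → a = 0) ∨
      (∀ b ∈ piece k (annIdeal Φ) (i + 1), ∃ a ∈ piece k (annIdeal Φ) i,
        Ideal.Quotient.mk (annIdeal Φ) (X 0) * a = b)) :
    (∀ μ ∈ annIdeal (Φ.comp (LinearMap.mulLeft k (X 0 : MvPolynomial (Fin 3) k))),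
      μ ∈ homogeneousSubmodule (Fin 3) k (n - 1) → μ = 0) ∧
    (∀ μ ∈ homogeneousSubmodule (Fin 3) k (2 * n - 1),
      μ ∈ annIdeal (Φ.comp (LinearMap.mulLeft k (X 0 : MvPolynomial (Fin 3) k)))) := by
  have hΦ' : IsHomogeneousDual Φ (2 * n - 1) := hΦ
  have hX : (X 0 : MvPolynomial (Fin 3) k).IsHomogeneous 1 := isHomogeneous_X k 0
  refine ⟨fun μ hμI hμ => ?_, fun μ hμ =>
    mem_annIdeal_comp_mulLeft_iff.2 (hΦ'.mem_annIdeal_of_lt (hX.mul hμ) (by omega))⟩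
  have hsymm : finrank k (piece k (annIdeal Φ) (n - 1 + 1)) =
      finrank k (piece k (annIdeal Φ) (n - 1)) :=
    hΦ'.finrank_map_homogeneousSubmodule_eq (by omega)
  have hinj := (hWL (n - 1)).elim id fun hsurj =>
    mul_left_eq_zero_of_surjOn_of_finrank_eq _ hsymm hsurj
  refine hJ μ (Ideal.Quotient.eq_zero_iff_mem.1 (hinj _ ⟨μ, hμ, rfl⟩ ?_)) hμ
  rw [← map_mul, Ideal.Quotient.eq_zero_iff_mem]
  exact mem_annIdeal_comp_mulLeft_iff.1 hμI

/-- let `n` be even and positive, `Φ` in the degree-`2n-1` part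
of the graded dual of `R = k[x,y,z]`, and `J = ann Φ`.  Assume `J_{n-1} = 0`
and that `x` is a weak Lefschetz element for `R/J`.  Then
`I = ann(x(Φ))` satisfies `I_{n-1} = 0` and `(R/I)_{2n-1} = 0`; that is (by
Macaulay duality in three variables), `I` is a linearly presented grade-three
Gorenstein ideal generated in degree `n`. -/
theorem ann_x_phi_linearly_presented (n : ℕ) (hn : Even n) (hpos : 0 < n)
    (Φ : Module.Dual k (MvPolynomial (Fin 3) k))
    (hΦ : ∀ p, Φ p = Φ (homogeneousComponent (2 * n - 1) p))
    (hJ : ∀ μ ∈ annIdeal Φ, μ ∈ homogeneousSubmodule (Fin 3) k (n - 1) → μ = 0)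
    (hWL : ∀ i : ℕ,
      (∀ a ∈ piece k (annIdeal Φ) i,
        Ideal.Quotient.mk (annIdeal Φ) (X 0) * a = 0 → a = 0) ∨
      (∀ b ∈ piece k (annIdeal Φ) (i + 1), ∃ a ∈ piece k (annIdeal Φ) i,
        Ideal.Quotient.mk (annIdeal Φ) (X 0) * a = b)) :
    (∀ μ ∈ annIdeal (Φ.comp (LinearMap.mulLeft k (X 0 : MvPolynomial (Fin 3) k))),
      μ ∈ homogeneousSubmodule (Fin 3) k (n - 1) → μ = 0) ∧
    (∀ μ ∈ homogeneousSubmodule (Fin 3) k (2 * n - 1),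
      μ ∈ annIdeal (Φ.comp (LinearMap.mulLeft k (X 0 : MvPolynomial (Fin 3) k)))) :=
  ann_x_phi_linearly_presented_general n hpos Φ hΦ hJ hWL
end

section
/- Let k be a field of characteristic zero, R = k[x,y,z], n an even positive integer, and J = (x^{n+1}, y^{n+1}, z^{n+1}) : (x+y+z)^{n+1}. Then the socle degree of the Artinian Gorenstein algebra R/J is 2n-1. -/
/-!
The ideal `I = (x^{n+1}, y^{n+1}, z^{n+1})` is a monomial ideal: a polynomial lies in `I` iff each
of its monomials has some exponent `> n`. Hence every form of degree `> 3n` lies in `I`, so every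
form of degree `≥ 2n` lies in `J`. Conversely, the coefficient of `x^n y^n z^n` in
`x^n y^{n-1} (x+y+z)^{n+1}` is the multinomial coefficient of `y z^n` in `(x+y+z)^{n+1}`, namely
`n + 1 ≠ 0`, so `x^n y^{n-1} ∉ J`.
-/

namespace MvPolynomial

variable {σ R : Type*} [CommSemiring R] {n : ℕ}

theorem mem_span_range_X_pow_iff {p : MvPolynomial σ R} :
    p ∈ Ideal.span (Set.range fun i => (X i : MvPolynomial σ R) ^ (n + 1)) ↔
      ∀ m ∈ p.support, ∃ i, n < m i := by
  have hrange : (Set.range fun i => (X i : MvPolynomial σ R) ^ (n + 1)) =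
      (fun s => monomial s (1 : R)) '' Set.range fun i => Finsupp.single i (n + 1) := by
    rw [← Set.range_comp]
    simp only [Function.comp_def, X_pow_eq_monomial]
  simp only [hrange, mem_ideal_span_monomial_image, Set.exists_range_iff, Finsupp.single_le_iff,
    Nat.succ_le_iff]

theorem coeff_eq_zero_of_mem_span_range_X_pow {p : MvPolynomial σ R} {m : σ →₀ ℕ}
    (hp : p ∈ Ideal.span (Set.range fun i => (X i : MvPolynomial σ R) ^ (n + 1)))
    (hm : ∀ i, m i ≤ n) : coeff m p = 0 := by
  by_contra hne
  obtain ⟨i, hi⟩ := mem_span_range_X_pow_iff.mp hp m (mem_support_iff.mpr hne)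
  exact (hm i).not_gt hi

theorem IsHomogeneous.mem_span_range_X_pow [Fintype σ] {p : MvPolynomial σ R} {d : ℕ}
    (hp : p.IsHomogeneous d) (hd : Fintype.card σ * n < d) :
    p ∈ Ideal.span (Set.range fun i => (X i : MvPolynomial σ R) ^ (n + 1)) := by
  refine mem_span_range_X_pow_iff.mpr fun m hm => ?_
  by_contra! hle
  have hdeg : m.degree = d := by
    rw [Finsupp.degree_eq_weight_one]
    exact hp (mem_support_iff.mp hm)
  have : m.degree ≤ Fintype.card σ * n := by
    simpa [Finsupp.degree_eq_sum] using Finset.sum_le_sum fun i (_ : i ∈ Finset.univ) => hle i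
  omega

theorem IsHomogeneous.mem_colon_span_range_X_pow [Fintype σ] {μ f : MvPolynomial σ R} {d e : ℕ}
    (hμ : μ.IsHomogeneous d) (hf : f.IsHomogeneous e) (hde : Fintype.card σ * n < d + e) :
    μ ∈ (Ideal.span (Set.range fun i => (X i : MvPolynomial σ R) ^ (n + 1))).colon
      (Ideal.span {f} : Set (MvPolynomial σ R)) :=
  Ideal.mem_colon_span_singleton.mpr ((hμ.mul hf).mem_span_range_X_pow hde)

theorem monomial_one_notMem_colon_span_sum_X_pow [Fintype σ] [CharZero R] {e : ℕ}
    {s t : σ →₀ ℕ} (hst : ∀ i, s i + t i ≤ n) (ht : t.degree = e) :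
    monomial s (1 : R) ∉ (Ideal.span (Set.range fun i => (X i : MvPolynomial σ R) ^ (n + 1))).colon
      (Ideal.span {(∑ i, X i : MvPolynomial σ R) ^ e} : Set (MvPolynomial σ R)) := by
  intro h
  have hcoeff := coeff_eq_zero_of_mem_span_range_X_pow (m := s + t)
    (Ideal.mem_colon_span_singleton.mp h) hst
  rw [coeff_monomial_mul, one_mul, coeff_sum_X_pow_of_fintype, if_pos (ht ▸ rfl)] at hcoeff
  exact (Finsupp.multinomial_eq t ▸ Nat.multinomial_pos _ _).ne' (by exact_mod_cast hcoeff)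

end MvPolynomial

open MvPolynomial

theorem socle_degree_colon_ideal_general {k : Type*} [Field k] [CharZero k]
    (n : ℕ) (hpos : 0 < n)
    (J : Ideal (MvPolynomial (Fin 3) k))
    (hJ : J = Submodule.colon
      (Ideal.span {(X 0 : MvPolynomial (Fin 3) k) ^ (n + 1), X 1 ^ (n + 1), X 2 ^ (n + 1)})
      (Ideal.span {((X 0 + X 1 + X 2 : MvPolynomial (Fin 3) k)) ^ (n + 1)})) :
    (¬ ∀ μ ∈ homogeneousSubmodule (Fin 3) k (2 * n - 1), μ ∈ J) ∧
    (∀ i, 2 * n - 1 < i → ∀ μ ∈ homogeneousSubmodule (Fin 3) k i, μ ∈ J) := by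
  have hI : ({X 0 ^ (n + 1), X 1 ^ (n + 1), X 2 ^ (n + 1)} : Set (MvPolynomial (Fin 3) k)) =
      Set.range fun i => X i ^ (n + 1) := by
    ext; simp [Fin.exists_fin_succ, eq_comm]
  have hL : (X 0 + X 1 + X 2 : MvPolynomial (Fin 3) k) = ∑ i, X i := (Fin.sum_univ_three _).symm
  subst hJ
  rw [hI, hL]
  refine ⟨fun hsocle => ?_, fun i hi μ hμ => ?_⟩
  · refine monomial_one_notMem_colon_span_sum_X_pow (s := .single 0 n + .single 1 (n - 1))
      (t := .single 1 1 + .single 2 n) ?_ ?_ (hsocle _ (isHomogeneous_monomial _ ?_))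
    · intro i; fin_cases i <;> simp; omega
    · rw [map_add, Finsupp.degree_single, Finsupp.degree_single]; omega
    · rw [map_add, Finsupp.degree_single, Finsupp.degree_single]; omega
  · have hsum : (∑ i, X i : MvPolynomial (Fin 3) k).IsHomogeneous 1 :=
      IsHomogeneous.sum _ _ _ fun i _ => isHomogeneous_X k i
    exact (mem_homogeneousSubmodule _ _).mp hμ |>.mem_colon_span_range_X_pow (hsum.pow (n + 1))
      (by simp; omega)

/-- over a field of characteristic zero, with `n` even and
positive, the Gorenstein ideal `J = (x^{n+1}, y^{n+1}, z^{n+1}) : (x+y+z)^{n+1}`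
of `R = k[x,y,z]` has socle degree `2n-1`; that is, the graded piece of `R/J`
in degree `2n-1` is nonzero while all higher graded pieces vanish. -/
theorem socle_degree_colon_ideal {k : Type*} [Field k] [CharZero k]
    (n : ℕ) (hn : Even n) (hpos : 0 < n)
    (J : Ideal (MvPolynomial (Fin 3) k))
    (hJ : J = Submodule.colon
      (Ideal.span {(X 0 : MvPolynomial (Fin 3) k) ^ (n + 1), X 1 ^ (n + 1), X 2 ^ (n + 1)})
      (Ideal.span {((X 0 + X 1 + X 2 : MvPolynomial (Fin 3) k)) ^ (n + 1)})) :
    (¬ ∀ μ ∈ homogeneousSubmodule (Fin 3) k (2 * n - 1), μ ∈ J) ∧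
    (∀ i, 2 * n - 1 < i → ∀ μ ∈ homogeneousSubmodule (Fin 3) k i, μ ∈ J) :=
  socle_degree_colon_ideal_general n hpos J hJ
end
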